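/- arXiv:1812.00618 — 6 statements merged into one kernel-verified Lean document; each statement's English description precedes it below -/
import Mathlib

section
/- Let Λ > 1 and ω > 0. If u, v > 0 satisfy u(u² + Λv² − 1) − ωv = 0 and v(v² + Λu² − 1) − ωu = 0 with u ≠ v, then uv = ω/(Λ−1) and u² + v² = 1. -/
theorem stmt_0 (Λ ω u v : ℝ) (hΛ : 1 < Λ) (hω : 0 < ω)
    (hu : 0 < u) (hv : 0 < v) (hne : u ≠ v)
    (h1 : u * (u ^ 2 + Λ * v ^ 2 - 1) - ω * v = 0)
    (h2 : v * (v ^ 2 + Λ * u ^ 2 - 1) - ω * u = 0) :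
    u * v = ω / (Λ - 1) ∧ u ^ 2 + v ^ 2 = 1 := by
  have hA : (u - v) * (u ^ 2 + u * v + v ^ 2 - Λ * u * v - 1 + ω) = 0 := by
    linear_combination h1 - h2
  have hB : (u + v) * (u ^ 2 - u * v + v ^ 2 + Λ * u * v - 1 - ω) = 0 := by
    linear_combination h1 + h2
  have hA0 : u ^ 2 + u * v + v ^ 2 - Λ * u * v - 1 + ω = 0 := by
    rcases mul_eq_zero.mp hA with h | h
    · exact absurd (sub_eq_zero.mp h) hne
    · exact h
  have hB0 : u ^ 2 - u * v + v ^ 2 + Λ * u * v - 1 - ω = 0 := by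
    rcases mul_eq_zero.mp hB with h | h
    · linarith
    · exact h
  constructor
  · have hΛ1 : Λ - 1 ≠ 0 := by linarith
    rw [eq_div_iff hΛ1]
    linarith
  · linarith
end

section
/- Let 0 < c₀ < 1/2 and let u : ℝ → (0,∞) be a C¹ solution of u' = (u² − u⁴ − c₀²)/(√2·√(u⁴ + c₀²)). Then the function ũ(x) = c₀/u(−x) is also a solution of the same ODE. -/
/-!
Writing `F` for the right-hand side of the ODE and `v = u(-x)`, the chain rule gives
`ũ'(x) = c₀ F(v) / v²`. The vector field has exactly this symmetry, `F(c₀ / v) = c₀ F(v) / v²`,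
because `√((c₀/v)⁴ + c₀²)` scales as `c₀ / v²` times `√(v⁴ + c₀²)`.
-/

noncomputable def odeRHS (c v : ℝ) : ℝ :=
  (v ^ 2 - v ^ 4 - c ^ 2) / (√2 * √(v ^ 4 + c ^ 2))

lemma sqrt_div_pow_four_add_sq {c v : ℝ} (hc : 0 ≤ c) (hv : v ≠ 0) :
    √((c / v) ^ 4 + c ^ 2) = c * √(v ^ 4 + c ^ 2) / v ^ 2 := by
  have hfactor : (c / v) ^ 4 + c ^ 2 = (c / v ^ 2) ^ 2 * (v ^ 4 + c ^ 2) := by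
    field_simp
    ring
  rw [hfactor, Real.sqrt_mul (by positivity), Real.sqrt_sq (by positivity)]
  ring

lemma odeRHS_div {c v : ℝ} (hc : 0 ≤ c) (hv : v ≠ 0) :
    odeRHS c (c / v) = c * odeRHS c v / v ^ 2 := by
  unfold odeRHS
  rw [sqrt_div_pow_four_add_sq hc hv]
  field_simp
  ring

lemma HasDerivAt.const_div_comp_neg {f : ℝ → ℝ} {f' x : ℝ} (c : ℝ)
    (hf : HasDerivAt f f' (-x)) (hfx : f (-x) ≠ 0) :
    HasDerivAt (fun y => c / f (-y)) (c * f' / f (-x) ^ 2) x := by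
  have hrefl : HasDerivAt (fun y => f (-y)) (-f') x := by
    simpa only [Function.comp_def, mul_neg_one] using hf.comp x (hasDerivAt_neg x)
  exact ((hasDerivAt_const x c).fun_div hrefl hfx).congr_deriv (by ring)

theorem stmt_7_general (c₀ : ℝ) (hc : 0 < c₀)
    (u : ℝ → ℝ) (hpos : ∀ x, 0 < u x)
    (hode : ∀ x, HasDerivAt u
      (((u x) ^ 2 - (u x) ^ 4 - c₀ ^ 2) /
        (Real.sqrt 2 * Real.sqrt ((u x) ^ 4 + c₀ ^ 2))) x) :
    ∀ x, HasDerivAt (fun y => c₀ / u (-y))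
      (((c₀ / u (-x)) ^ 2 - (c₀ / u (-x)) ^ 4 - c₀ ^ 2) /
        (Real.sqrt 2 * Real.sqrt ((c₀ / u (-x)) ^ 4 + c₀ ^ 2))) x := by
  intro x
  change HasDerivAt _ (odeRHS c₀ (c₀ / u (-x))) x
  rw [odeRHS_div hc.le (hpos (-x)).ne']
  exact (hode (-x)).const_div_comp_neg c₀ (hpos (-x)).ne'

theorem stmt_7 (c₀ : ℝ) (hc : 0 < c₀) (hc' : c₀ < 1 / 2)
    (u : ℝ → ℝ) (hpos : ∀ x, 0 < u x)
    (hode : ∀ x, HasDerivAt u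
      (((u x) ^ 2 - (u x) ^ 4 - c₀ ^ 2) /
        (Real.sqrt 2 * Real.sqrt ((u x) ^ 4 + c₀ ^ 2))) x) :
    ∀ x, HasDerivAt (fun y => c₀ / u (-y))
      (((c₀ / u (-x)) ^ 2 - (c₀ / u (-x)) ^ 4 - c₀ ^ 2) /
        (Real.sqrt 2 * Real.sqrt ((c₀ / u (-x)) ^ 4 + c₀ ^ 2))) x :=
  stmt_7_general c₀ hc u hpos hode
end

section
/- Let 0 < c₀ < 1/2 and let u₀ : ℝ → (0,∞) be a solution of u' = (u² − u⁴ − c₀²)/(√2·√(u⁴ + c₀²)) with u₀(0) = √c₀. Then u₀(x)·u₀(−x) = c₀ for all x ∈ ℝ. -/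
/-!
Writing `F` for the right-hand side, one checks `F (c₀ / u) = c₀ F(u) / u²`, so together with
time reversal the inversion `u ↦ c₀ / u` maps solutions to solutions: `t ↦ c₀ / u₀ (-t)` solves
the same ODE. It agrees with `u₀` at `t = 0`, because `√c₀` is the fixed point of the inversion,
and `F` is smooth since `c₀ ≠ 0`; uniqueness of solutions then gives `u₀ x = c₀ / u₀ (-x)`.
-/

open Set Filter Topology

theorem ODE_solution_unique_univ_of_locallyLipschitz {E : Type*} [NormedAddCommGroup E]
    [NormedSpace ℝ E] {v : E → E} (hv : LocallyLipschitz v) {f g : ℝ → E} {t₀ : ℝ}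
    (hf : ∀ t, HasDerivAt f (v (f t)) t) (hg : ∀ t, HasDerivAt g (v (g t)) t)
    (heq : f t₀ = g t₀) : f = g := by
  have hf_cont : Continuous f := continuous_iff_continuousAt.2 fun t ↦ (hf t).continuousAt
  have hg_cont : Continuous g := continuous_iff_continuousAt.2 fun t ↦ (hg t).continuousAt
  have hopen : IsOpen {t | f t = g t} := by
    refine isOpen_iff_mem_nhds.2 fun t (ht : f t = g t) ↦ ?_
    obtain ⟨K, s, hs, hK⟩ := hv (f t)
    have hfs : ∀ᶠ t' in 𝓝 t, f t' ∈ s := hf_cont.continuousAt hs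
    have hgs : ∀ᶠ t' in 𝓝 t, g t' ∈ s := hg_cont.continuousAt (ht ▸ hs)
    exact ODE_solution_unique_of_eventually (v := fun _ ↦ v) (s := fun _ ↦ s)
      (Eventually.of_forall fun _ ↦ hK) (hfs.mono fun t' h ↦ ⟨hf t', h⟩)
      (hgs.mono fun t' h ↦ ⟨hg t', h⟩) ht
  have hclopen : IsClopen {t | f t = g t} := ⟨isClosed_eq hf_cont hg_cont, hopen⟩
  funext t
  exact eq_univ_iff_forall.1 (hclopen.eq_univ ⟨t₀, heq⟩) t

noncomputable def profileField (c u : ℝ) : ℝ :=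
  (u ^ 2 - u ^ 4 - c ^ 2) / (Real.sqrt 2 * Real.sqrt (u ^ 4 + c ^ 2))

theorem contDiff_profileField {c : ℝ} (hc : c ≠ 0) {n : WithTop ℕ∞} :
    ContDiff ℝ n (profileField c) := by
  have hpos : ∀ u : ℝ, 0 < u ^ 4 + c ^ 2 := fun u ↦ by positivity
  refine (by fun_prop : ContDiff ℝ n fun u : ℝ ↦ u ^ 2 - u ^ 4 - c ^ 2).div
    (contDiff_const.mul ((by fun_prop : ContDiff ℝ n fun u : ℝ ↦ u ^ 4 + c ^ 2).sqrt
      fun u ↦ (hpos u).ne')) fun u ↦ by positivity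

theorem profileField_div {c w : ℝ} (hc : 0 ≤ c) (hw : w ≠ 0) :
    profileField c (c / w) = c * profileField c w / w ^ 2 := by
  have hsqrt : Real.sqrt ((c / w) ^ 4 + c ^ 2) = c / w ^ 2 * Real.sqrt (w ^ 4 + c ^ 2) := by
    rw [show (c / w) ^ 4 + c ^ 2 = (c / w ^ 2) ^ 2 * (w ^ 4 + c ^ 2) by field_simp; ring,
      Real.sqrt_mul (sq_nonneg _), Real.sqrt_sq (by positivity)]
  have : Real.sqrt (w ^ 4 + c ^ 2) ≠ 0 := by positivity
  rw [profileField, profileField, hsqrt]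
  field_simp
  ring

theorem hasDerivAt_div_comp_neg_profileField {c : ℝ} (hc : 0 ≤ c) {u : ℝ → ℝ} {t : ℝ}
    (hu : HasDerivAt u (profileField c (u (-t))) (-t)) (hu₀ : u (-t) ≠ 0) :
    HasDerivAt (fun s ↦ c / u (-s)) (profileField c (c / u (-t))) t := by
  rw [profileField_div hc hu₀]
  refine ((hasDerivAt_const t c).div (hu.comp t (hasDerivAt_neg t)) hu₀).congr_deriv ?_
  simp only [Function.comp_apply]
  ring

theorem stmt_8_general (c₀ : ℝ) (hc : 0 < c₀)
    (u₀ : ℝ → ℝ) (hpos : ∀ x, 0 < u₀ x)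
    (hode : ∀ x, HasDerivAt u₀
      (((u₀ x) ^ 2 - (u₀ x) ^ 4 - c₀ ^ 2) /
        (Real.sqrt 2 * Real.sqrt ((u₀ x) ^ 4 + c₀ ^ 2))) x)
    (h0 : u₀ 0 = Real.sqrt c₀) :
    ∀ x, u₀ x * u₀ (-x) = c₀ := by
  have hreflect : ∀ t, HasDerivAt (fun s ↦ c₀ / u₀ (-s)) (profileField c₀ (c₀ / u₀ (-t))) t :=
    fun t ↦ hasDerivAt_div_comp_neg_profileField hc.le (hode (-t)) (hpos (-t)).ne'
  have hinit : u₀ 0 = c₀ / u₀ (-0) := by rw [neg_zero, h0, Real.div_sqrt]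
  have hsymm := ODE_solution_unique_univ_of_locallyLipschitz
    (contDiff_profileField hc.ne' (n := 1)).locallyLipschitz hode hreflect hinit
  intro x
  rw [congrFun hsymm x, div_mul_cancel₀ _ (hpos (-x)).ne']

theorem stmt_8 (c₀ : ℝ) (hc : 0 < c₀) (hc' : c₀ < 1 / 2)
    (u₀ : ℝ → ℝ) (hpos : ∀ x, 0 < u₀ x)
    (hode : ∀ x, HasDerivAt u₀
      (((u₀ x) ^ 2 - (u₀ x) ^ 4 - c₀ ^ 2) /
        (Real.sqrt 2 * Real.sqrt ((u₀ x) ^ 4 + c₀ ^ 2))) x)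
    (h0 : u₀ 0 = Real.sqrt c₀) :
    ∀ x, u₀ x * u₀ (-x) = c₀ :=
  stmt_8_general c₀ hc u₀ hpos hode h0
end

section
/- Let 0 < c₀ < 1/2 and let (u,z) : ℝ → ℝ² with u > 0 solve the reduced system u' = z, z' = u³ − u + (c₀²/u)·(2(u²+z²)/(u⁴+c₀²) − 1). Then H₀(x) = (1 + c₀²/u⁴)·z²/2 − (1 − u² − c₀²/u²)²/4 is constant along the solution. -/
/-!
`H₀` is a first integral although the system is not in canonical Hamiltonian form: along a solution
`d/dx H₀ = z · (∂ᵤH₀ + (1 + c₀²/u⁴) z')`, and multiplying the equation for `z'` by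
`1 + c₀²/u⁴ = (u⁴ + c₀²)/u⁴` clears the denominator `u⁴ + c₀²`, after which the bracket vanishes
identically. A function with zero derivative on `ℝ` is constant.
-/

noncomputable section

def reducedHamiltonian (c u z : ℝ) : ℝ :=
  (1 + c ^ 2 / u ^ 4) * z ^ 2 / 2 - (1 - u ^ 2 - c ^ 2 / u ^ 2) ^ 2 / 4

def reducedForce (c u z : ℝ) : ℝ :=
  u ^ 3 - u + (c ^ 2 / u) * (2 * (u ^ 2 + z ^ 2) / (u ^ 4 + c ^ 2) - 1)

theorem hasDerivAt_reducedHamiltonian {c u' z' x : ℝ} {u z : ℝ → ℝ} (hux : u x ≠ 0)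
    (hu : HasDerivAt u u' x) (hz : HasDerivAt z z' x) :
    HasDerivAt (fun t => reducedHamiltonian c (u t) (z t))
      ((-2 * c ^ 2 * z x ^ 2 / u x ^ 5
          + (1 - u x ^ 2 - c ^ 2 / u x ^ 2) * (u x - c ^ 2 / u x ^ 3)) * u'
        + (1 + c ^ 2 / u x ^ 4) * z x * z') x := by
  have hinv4 := (hasDerivAt_const x (c ^ 2)).div (hu.pow 4) (pow_ne_zero 4 hux)
  have hinv2 := (hasDerivAt_const x (c ^ 2)).div (hu.pow 2) (pow_ne_zero 2 hux)
  have hH := ((((hasDerivAt_const x 1).add hinv4).mul (hz.pow 2)).div_const 2).sub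
    (((((hasDerivAt_const x 1).sub (hu.pow 2)).sub hinv2).pow 2).div_const 4)
  unfold reducedHamiltonian
  refine hH.congr_deriv ?_
  simp only [Pi.add_apply, Pi.sub_apply, Pi.div_apply, Pi.pow_apply, Nat.reduceSub,
    Nat.cast_ofNat]
  field_simp
  ring

theorem reducedHamiltonian_partial_add_force_eq_zero (c : ℝ) {u : ℝ} (hu : u ≠ 0) (z : ℝ) :
    -2 * c ^ 2 * z ^ 2 / u ^ 5 + (1 - u ^ 2 - c ^ 2 / u ^ 2) * (u - c ^ 2 / u ^ 3)
      + (1 + c ^ 2 / u ^ 4) * reducedForce c u z = 0 := by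
  have hden : u ^ 4 + c ^ 2 ≠ 0 := by positivity
  unfold reducedForce
  field_simp
  ring

theorem reducedHamiltonian_const_of_solution {c : ℝ} {u z : ℝ → ℝ} (hpos : ∀ x, u x ≠ 0)
    (hu : ∀ x, HasDerivAt u (z x) x)
    (hz : ∀ x, HasDerivAt z (reducedForce c (u x) (z x)) x) (x y : ℝ) :
    reducedHamiltonian c (u x) (z x) = reducedHamiltonian c (u y) (z y) := by
  have hH : ∀ t, HasDerivAt (fun t => reducedHamiltonian c (u t) (z t)) 0 t := fun t => by
    convert hasDerivAt_reducedHamiltonian (hpos t) (hu t) (hz t) using 1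
    linear_combination (-z t) * reducedHamiltonian_partial_add_force_eq_zero c (hpos t) (z t)
  exact is_const_of_deriv_eq_zero (fun t => (hH t).differentiableAt) (fun t => (hH t).deriv) x y

end

theorem stmt_10_general (c₀ : ℝ)
    (u z : ℝ → ℝ) (hpos : ∀ x, 0 < u x)
    (hu : ∀ x, HasDerivAt u (z x) x)
    (hz : ∀ x, HasDerivAt z
      ((u x) ^ 3 - u x + (c₀ ^ 2 / u x) *
        (2 * ((u x) ^ 2 + (z x) ^ 2) / ((u x) ^ 4 + c₀ ^ 2) - 1)) x) :
    ∀ x y : ℝ,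
      (1 + c₀ ^ 2 / (u x) ^ 4) * (z x) ^ 2 / 2
        - (1 - (u x) ^ 2 - c₀ ^ 2 / (u x) ^ 2) ^ 2 / 4 =
      (1 + c₀ ^ 2 / (u y) ^ 4) * (z y) ^ 2 / 2
        - (1 - (u y) ^ 2 - c₀ ^ 2 / (u y) ^ 2) ^ 2 / 4 :=
  reducedHamiltonian_const_of_solution (c := c₀) (fun x => (hpos x).ne') hu hz

theorem stmt_10 (c₀ : ℝ) (hc : 0 < c₀) (hc' : c₀ < 1 / 2)
    (u z : ℝ → ℝ) (hpos : ∀ x, 0 < u x)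
    (hu : ∀ x, HasDerivAt u (z x) x)
    (hz : ∀ x, HasDerivAt z
      ((u x) ^ 3 - u x + (c₀ ^ 2 / u x) *
        (2 * ((u x) ^ 2 + (z x) ^ 2) / ((u x) ^ 4 + c₀ ^ 2) - 1)) x) :
    ∀ x y : ℝ,
      (1 + c₀ ^ 2 / (u x) ^ 4) * (z x) ^ 2 / 2
        - (1 - (u x) ^ 2 - c₀ ^ 2 / (u x) ^ 2) ^ 2 / 4 =
      (1 + c₀ ^ 2 / (u y) ^ 4) * (z y) ^ 2 / 2
        - (1 - (u y) ^ 2 - c₀ ^ 2 / (u y) ^ 2) ^ 2 / 4 :=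
  stmt_10_general c₀ u z hpos hu hz
end

section
/- Let 0 < c₀ < 1/2 and let φ₀ : ℝ → ℝ solve φ' = 2c₀ − sin φ with φ₀(0) = π/2. Then φ₀ is strictly decreasing, φ₀(x) + φ₀(−x) = π for all x, and φ₀(x) → π − φ̄₀ as x → −∞ and φ₀(x) → φ̄₀ as x → +∞, where φ̄₀ ∈ (0, π/2) is the unique angle with sin φ̄₀ = 2c₀. -/
/-!
The vector field `v y = 2c₀ - sin y` is Lipschitz, vanishes at `φ̄₀` and `π - φ̄₀`, and satisfies
`v (π - y) = v y`. By uniqueness of solutions, `φ₀` can never reach an equilibrium, so it stays in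
`(φ̄₀, π - φ̄₀)` where `v < 0`; and `t ↦ π - φ₀ (-t)` is a solution with the same value `π / 2` at
`0`, which gives the symmetry. A monotone bounded solution converges to a zero of `v`, and the only
one in `[φ̄₀, π / 2]` is `φ̄₀`.
-/

open Filter Real Set Topology

theorem eq_zero_of_tendsto_of_hasDerivAt {f f' : ℝ → ℝ} {L l : ℝ}
    (hf : ∀ x, HasDerivAt f (f' x) x) (hfL : Tendsto f atTop (𝓝 L))
    (hf'l : Tendsto f' atTop (𝓝 l)) : l = 0 := by
  -- the increments `f (x + 1) - f x → 0` are values of `f'` at points `ξ x ≥ x`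
  choose ξ hξ hξslope using fun x : ℝ =>
    exists_hasDerivAt_eq_slope f f' (lt_add_one x)
      (fun y _ => (hf y).continuousAt.continuousWithinAt) (fun y _ => hf y)
  have hξtop : Tendsto ξ atTop atTop :=
    tendsto_atTop_mono (fun x => (hξ x).1.le) tendsto_id
  have hincr : Tendsto (fun x => f (x + 1) - f x) atTop (𝓝 (L - L)) :=
    (hfL.comp (tendsto_atTop_add_const_right _ 1 tendsto_id)).sub hfL
  refine tendsto_nhds_unique (hf'l.comp hξtop) ?_
  rw [← sub_self L]
  refine hincr.congr fun x => ?_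
  simp [hξslope x]

namespace ODE

variable {v f g : ℝ → ℝ}

theorem eq_of_lipschitzWith {K : NNReal} (hv : LipschitzWith K v)
    (hf : ∀ x, HasDerivAt f (v (f x)) x) (hg : ∀ x, HasDerivAt g (v (g x)) x)
    {t₀ : ℝ} (h : f t₀ = g t₀) : f = g :=
  ODE_solution_unique_univ (v := fun _ => v) (s := fun _ => (univ : Set ℝ))
    (fun _ => hv.lipschitzOnWith) (fun x => ⟨hf x, trivial⟩) (fun x => ⟨hg x, trivial⟩) h

theorem apply_ne_of_eq_zero {K : NNReal} (hv : LipschitzWith K v)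
    (hf : ∀ x, HasDerivAt f (v (f x)) x) {c t₀ : ℝ} (hc : v c = 0) (ht₀ : f t₀ ≠ c)
    (x : ℝ) : f x ≠ c := by
  intro hx
  have hconst : ∀ t : ℝ, HasDerivAt (fun _ => c) (v c) t := fun t => hc ▸ hasDerivAt_const t c
  exact ht₀ (congrFun (eq_of_lipschitzWith hv hf hconst hx) t₀)

theorem mem_Ioo_of_eq_zero {K : NNReal} (hv : LipschitzWith K v)
    (hf : ∀ x, HasDerivAt f (v (f x)) x) {a b t₀ : ℝ} (ha : v a = 0) (hb : v b = 0)
    (ht₀ : f t₀ ∈ Ioo a b) (x : ℝ) : f x ∈ Ioo a b := by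
  have hcont : ContinuousOn f (uIcc t₀ x) := fun y _ => (hf y).continuousAt.continuousWithinAt
  by_contra hx
  obtain ⟨c, hc, hcv⟩ : ∃ c ∈ ({a, b} : Set ℝ), c ∈ uIcc (f t₀) (f x) := by
    simp only [mem_Ioo, not_and_or, not_lt] at hx ht₀
    rcases hx with hx | hx
    · exact ⟨a, by simp, mem_uIcc.2 (Or.inr ⟨hx, ht₀.1.le⟩)⟩
    · exact ⟨b, by simp, mem_uIcc.2 (Or.inl ⟨ht₀.2.le, hx⟩)⟩
  obtain ⟨y, -, hy⟩ := intermediate_value_uIcc hcont hcv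
  rcases hc with rfl | rfl
  · exact apply_ne_of_eq_zero hv hf ha ht₀.1.ne' y hy
  · exact apply_ne_of_eq_zero hv hf hb ht₀.2.ne y hy

theorem apply_ciInf_eq_zero (hv : Continuous v) (hf : ∀ x, HasDerivAt f (v (f x)) x)
    (hanti : Antitone f) (hbdd : BddBelow (range f)) : v (⨅ x, f x) = 0 :=
  have hlim := tendsto_atTop_ciInf hanti hbdd
  eq_zero_of_tendsto_of_hasDerivAt hf hlim ((hv.tendsto _).comp hlim)

theorem hasDerivAt_const_sub_comp_neg {a : ℝ} (hva : ∀ y, v (a - y) = v y)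
    (hf : ∀ x, HasDerivAt f (v (f x)) x) (x : ℝ) :
    HasDerivAt (fun t => a - f (-t)) (v (a - f (-x))) x := by
  have := ((hf (-x)).comp x (hasDerivAt_neg x)).const_sub a
  simpa [hva] using this

theorem add_apply_neg_eq {K : NNReal} (hv : LipschitzWith K v)
    (hf : ∀ x, HasDerivAt f (v (f x)) x) {a : ℝ} (hva : ∀ y, v (a - y) = v y)
    (h0 : 2 * f 0 = a) (x : ℝ) : f x + f (-x) = a := by
  have := congrFun (eq_of_lipschitzWith hv hf (hasDerivAt_const_sub_comp_neg hva hf)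
    (t₀ := 0) (by simp only [neg_zero]; linarith)) x
  linarith

end ODE

theorem Real.sin_lt_sin_of_mem_Ioo_pi_sub {a y : ℝ} (ha : -(π / 2) ≤ a)
    (hy : y ∈ Ioo a (π - a)) : sin a < sin y := by
  rcases le_total y (π / 2) with h | h
  · exact sin_lt_sin_of_lt_of_le_pi_div_two ha h hy.1
  · rw [← sin_pi_sub y]
    exact sin_lt_sin_of_lt_of_le_pi_div_two ha (by linarith) (by linarith [hy.2])

open Filter Real in
theorem stmt_12 (c₀ : ℝ) (hc : 0 < c₀) (hc' : c₀ < 1 / 2)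
    (φ₀ : ℝ → ℝ)
    (hode : ∀ x, HasDerivAt φ₀ (2 * c₀ - Real.sin (φ₀ x)) x)
    (h0 : φ₀ 0 = Real.pi / 2) :
    StrictAnti φ₀ ∧ (∀ x, φ₀ x + φ₀ (-x) = Real.pi) ∧
    Tendsto φ₀ atBot (nhds (Real.pi - Real.arcsin (2 * c₀))) ∧
    Tendsto φ₀ atTop (nhds (Real.arcsin (2 * c₀))) := by
  set φb := arcsin (2 * c₀)
  have hsinb : sin φb = 2 * c₀ := sin_arcsin (by linarith) (by linarith)
  have hφb : 0 < φb ∧ φb < π / 2 :=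
    ⟨arcsin_pos.2 (by linarith), arcsin_lt_pi_div_two.2 (by linarith)⟩
  have hv : LipschitzWith 1 fun y => 2 * c₀ - sin y := by
    simpa using (LipschitzWith.const (2 * c₀)).sub lipschitzWith_sin
  have hbounds : ∀ x, φ₀ x ∈ Ioo φb (π - φb) :=
    ODE.mem_Ioo_of_eq_zero hv hode (t₀ := 0) (by simp [hsinb]) (by simp [hsinb])
      (by rw [h0]; constructor <;> linarith)
  have hanti : StrictAnti φ₀ := strictAnti_of_hasDerivAt_neg hode fun x =>
    sub_neg.2 (hsinb ▸ sin_lt_sin_of_mem_Ioo_pi_sub (by linarith) (hbounds x))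
  have hsym : ∀ x, φ₀ x + φ₀ (-x) = π :=
    ODE.add_apply_neg_eq hv hode (fun y => by simp [sin_pi_sub]) (by rw [h0]; ring)
  have hTop : Tendsto φ₀ atTop (𝓝 φb) := by
    have hbdd : BddBelow (range φ₀) := ⟨φb, forall_mem_range.2 fun x => (hbounds x).1.le⟩
    have hL : (⨅ x, φ₀ x) = φb := by
      refine injOn_sin ⟨?_, (ciInf_le hbdd 0).trans_eq h0⟩ ⟨by linarith, hφb.2.le⟩ ?_
      · linarith [le_ciInf fun x => (hbounds x).1.le]
      · linarith [ODE.apply_ciInf_eq_zero hv.continuous hode hanti.antitone hbdd]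
    simpa [hL] using tendsto_atTop_ciInf hanti.antitone hbdd
  refine ⟨hanti, hsym, ?_, hTop⟩
  refine (tendsto_const_nhds.sub (hTop.comp tendsto_neg_atBot_atTop)).congr fun x => ?_
  simp only [Function.comp_apply]
  linarith [hsym x]
end

section
/- Let 0 < c₀ < 1/2 and let u₀ solve u' = (u² − u⁴ − c₀²)/(√2√(u⁴+c₀²)) with u₀(0) = √c₀, and set z₀ = u₀'. Then z₀(−x) = c₀·z₀(x)/u₀(x)² for all x ∈ ℝ. -/
/-!
The vector field `F u = (u² - u⁴ - c₀²) / (√2 √(u⁴ + c₀²))` is equivariant under the inversion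
`u ↦ c₀ / u`: `F (c₀ / u) = c₀ F u / u²`. Hence if `u₀` solves `u' = F u`, so does
`t ↦ c₀ / u₀ (-t)`, and both equal `√c₀` at `0`. Since `F` is `C¹`, solutions are unique,
so `u₀ (-x) = c₀ / u₀ x`, and the claim follows by evaluating `z₀ = F ∘ u₀` at `-x`.
-/

open Set Filter Topology

theorem eq_of_hasDerivAt_of_locallyLipschitz {E : Type*} [NormedAddCommGroup E]
    [NormedSpace ℝ E] {F : E → E} (hF : LocallyLipschitz F) {f g : ℝ → E}
    (hf : ∀ t, HasDerivAt f (F (f t)) t) (hg : ∀ t, HasDerivAt g (F (g t)) t) {t₀ : ℝ}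
    (heq : f t₀ = g t₀) : f = g := by
  have hlocal : ∀ t, f t = g t → f =ᶠ[𝓝 t] g := by
    intro t ht
    obtain ⟨K, U, hU, hK⟩ := hF (f t)
    have hfU : ∀ᶠ s in 𝓝 t, f s ∈ U := (hf t).continuousAt.eventually_mem hU
    have hgU : ∀ᶠ s in 𝓝 t, g s ∈ U := (hg t).continuousAt.eventually_mem (ht ▸ hU)
    exact ODE_solution_unique_of_eventually (v := fun _ => F) (s := fun _ => U)
      (.of_forall fun _ => hK) ((Eventually.of_forall hf).and hfU)
      ((Eventually.of_forall hg).and hgU) ht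
  have hclopen : IsClopen {t | f t = g t} :=
    ⟨isClosed_eq (continuous_iff_continuousAt.2 fun t => (hf t).continuousAt)
        (continuous_iff_continuousAt.2 fun t => (hg t).continuousAt),
      isOpen_iff_mem_nhds.2 hlocal⟩
  funext t
  exact (hclopen.eq_univ ⟨t₀, heq⟩).superset (mem_univ t)

theorem hasDerivAt_div_comp_neg {F : ℝ → ℝ} {c : ℝ}
    (hF : ∀ s, 0 < s → F (c / s) = c * F s / s ^ 2) {u : ℝ → ℝ} {t : ℝ} (hpos : 0 < u (-t))
    (hu : HasDerivAt u (F (u (-t))) (-t)) :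
    HasDerivAt (fun t => c / u (-t)) (F (c / u (-t))) t := by
  have hneg : HasDerivAt (fun t => u (-t)) (F (u (-t)) * -1) t :=
    hu.comp t (hasDerivAt_neg t)
  refine ((hasDerivAt_const t c).div hneg hpos.ne').congr_deriv ?_
  rw [hF _ hpos]
  ring

noncomputable def odeField (c u : ℝ) : ℝ :=
  (u ^ 2 - u ^ 4 - c ^ 2) / (Real.sqrt 2 * Real.sqrt (u ^ 4 + c ^ 2))

theorem contDiff_odeField {c : ℝ} (hc : c ≠ 0) : ContDiff ℝ 1 (odeField c) := by
  have hpos : ∀ u : ℝ, 0 < u ^ 4 + c ^ 2 := fun u => by positivity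
  unfold odeField
  refine ContDiff.div (by fun_prop) (contDiff_const.mul ?_) fun u => by
    have := hpos u; positivity
  exact ContDiff.sqrt (by fun_prop) fun u => (hpos u).ne'

theorem odeField_div {c s : ℝ} (hc : 0 ≤ c) (hs : 0 < s) :
    odeField c (c / s) = c * odeField c s / s ^ 2 := by
  have hsqrt : Real.sqrt ((c / s) ^ 4 + c ^ 2) = c / s ^ 2 * Real.sqrt (s ^ 4 + c ^ 2) := by
    rw [← Real.sqrt_sq (by positivity : 0 ≤ c / s ^ 2), ← Real.sqrt_mul (by positivity)]
    congr 1
    field_simp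
    ring
  have : 0 < Real.sqrt (s ^ 4 + c ^ 2) := Real.sqrt_pos.2 (by positivity)
  unfold odeField
  rw [hsqrt]
  field_simp
  ring

theorem stmt_19_general (c₀ : ℝ) (hc : 0 < c₀)
    (u₀ : ℝ → ℝ) (hpos : ∀ x, 0 < u₀ x)
    (hode : ∀ x, HasDerivAt u₀
      (((u₀ x) ^ 2 - (u₀ x) ^ 4 - c₀ ^ 2) /
        (Real.sqrt 2 * Real.sqrt ((u₀ x) ^ 4 + c₀ ^ 2))) x)
    (h0 : u₀ 0 = Real.sqrt c₀)
    (z₀ : ℝ → ℝ) (hz : z₀ = deriv u₀) :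
    ∀ x, z₀ (-x) = c₀ * z₀ x / (u₀ x) ^ 2 := by
  have hsol : ∀ t, HasDerivAt u₀ (odeField c₀ (u₀ t)) t := hode
  have hinit : u₀ 0 = c₀ / u₀ (-0) := by
    rw [neg_zero, h0, eq_div_iff (Real.sqrt_pos.2 hc).ne', Real.mul_self_sqrt hc.le]
  have hrefl : u₀ = fun t => c₀ / u₀ (-t) :=
    eq_of_hasDerivAt_of_locallyLipschitz (contDiff_odeField hc.ne').locallyLipschitz hsol
      (fun t => hasDerivAt_div_comp_neg (fun s => odeField_div hc.le) (hpos _) (hsol _)) hinit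
  intro x
  have hux : u₀ (-x) = c₀ / u₀ x := by simpa only [neg_neg] using congrFun hrefl (-x)
  rw [hz, (hsol _).deriv, (hsol _).deriv, hux, odeField_div hc.le (hpos x)]

theorem stmt_19 (c₀ : ℝ) (hc : 0 < c₀) (hc' : c₀ < 1 / 2)
    (u₀ : ℝ → ℝ) (hpos : ∀ x, 0 < u₀ x)
    (hode : ∀ x, HasDerivAt u₀
      (((u₀ x) ^ 2 - (u₀ x) ^ 4 - c₀ ^ 2) /
        (Real.sqrt 2 * Real.sqrt ((u₀ x) ^ 4 + c₀ ^ 2))) x)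
    (h0 : u₀ 0 = Real.sqrt c₀)
    (z₀ : ℝ → ℝ) (hz : z₀ = deriv u₀) :
    ∀ x, z₀ (-x) = c₀ * z₀ x / (u₀ x) ^ 2 :=
  stmt_19_general c₀ hc u₀ hpos hode h0 z₀ hz
end
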